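/- Let m be a positive natural number and s : Fin m → ℝ with s i ≥ Real.exp 1 for all i. Define the Gini coefficient of a positive weight function w : Fin m → ℝ as G(w) = (∑_{i} ∑_{j} |w i − w j|) / (2 · m · ∑_{i} w i). Then G(fun i => Real.log (s i)) ≤ G(s); that is, the Gini coefficient of the logarithmic stake weights is at most the Gini coefficient of the linear stake weights. -/

import Mathlib

/-! Cross-multiplying, the claim becomes
`(∑ᵢⱼ |log sᵢ - log sⱼ|) (∑ₖ sₖ) ≤ (∑ᵢⱼ |sᵢ - sⱼ|) (∑ₖ log sₖ)`, an inequality between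
two triple sums. Averaging over cyclic rotations of the indices reduces it to one triple
`x ≥ y ≥ z`, where the difference of the two sides is `2 (z log x - x log z)`, which is
nonpositive because `log t / t` is antitone on `[e, ∞)`. -/

open Finset

/-- The Gini coefficient of a weight function `w` on `m` validators, via the
mean-absolute-difference formula. -/
noncomputable def gini (m : ℕ) (w : Fin m → ℝ) : ℝ :=
  (∑ i, ∑ j, |w i - w j|) / (2 * m * ∑ i, w i)

theorem Finset.sum_sum_sum_rotate {ι M : Type*} [Fintype ι] [AddCommMonoid M]
    (g : ι → ι → ι → M) : ∑ i, ∑ j, ∑ k, g j k i = ∑ i, ∑ j, ∑ k, g i j k := by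
  rw [Finset.sum_comm]
  exact Finset.sum_congr rfl fun _ _ => Finset.sum_comm

theorem Finset.sum_sum_sum_le_of_cyclic {ι : Type*} [Fintype ι] {g h : ι → ι → ι → ℝ}
    (hgh : ∀ i j k, g i j k + g j k i + g k i j ≤ h i j k + h j k i + h k i j) :
    ∑ i, ∑ j, ∑ k, g i j k ≤ ∑ i, ∑ j, ∑ k, h i j k := by
  have hsum := Finset.sum_le_sum fun i (_ : i ∈ univ) =>
    Finset.sum_le_sum fun j (_ : j ∈ univ) => Finset.sum_le_sum fun k (_ : k ∈ univ) => hgh i j k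
  simp only [Finset.sum_add_distrib] at hsum
  linarith [sum_sum_sum_rotate g, sum_sum_sum_rotate fun i j k => g j k i,
    sum_sum_sum_rotate h, sum_sum_sum_rotate fun i j k => h j k i]

section

variable {S : Set ℝ} {f : ℝ → ℝ}

theorem mul_le_mul_of_div_self_antitoneOn (hpos : ∀ x ∈ S, 0 < x)
    (hf : AntitoneOn (fun x => f x / x) S) {x z : ℝ} (hx : x ∈ S) (hz : z ∈ S) (hzx : z ≤ x) :
    f x * z ≤ x * f z := by
  have h := hf hz hx hzx
  rw [div_le_div_iff₀ (hpos x hx) (hpos z hz)] at h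
  linarith

theorem abs_sub_mul_cyclic_le (hpos : ∀ x ∈ S, 0 < x) (hf : MonotoneOn f S)
    (hf' : AntitoneOn (fun x => f x / x) S) {x y z : ℝ} (hx : x ∈ S) (hy : y ∈ S) (hz : z ∈ S) :
    |f x - f y| * z + |f y - f z| * x + |f z - f x| * y ≤
      |x - y| * f z + |y - z| * f x + |z - x| * f y := by
  wlog hyx : y ≤ x generalizing x y
  · have := this hy hx (le_of_not_ge hyx)
    rw [abs_sub_comm (f y) (f x), abs_sub_comm (f x) (f z), abs_sub_comm (f z) (f y),
      abs_sub_comm y x, abs_sub_comm x z, abs_sub_comm z y] at this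
    linarith
  wlog hzx : z ≤ x generalizing x z
  · have hxz := le_of_not_ge hzx
    have := this hx hz (hyx.trans hxz) hxz
    rw [abs_sub_comm (f z) (f y), abs_sub_comm (f y) (f x), abs_sub_comm (f x) (f z),
      abs_sub_comm z y, abs_sub_comm y x, abs_sub_comm x z] at this
    linarith
  wlog hzy : z ≤ y generalizing y z
  · have := this hz hy hzx hyx (le_of_not_ge hzy)
    rw [abs_sub_comm (f x) (f z), abs_sub_comm (f z) (f y), abs_sub_comm (f y) (f x),
      abs_sub_comm x z, abs_sub_comm z y, abs_sub_comm y x] at this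
    linarith
  have key := mul_le_mul_of_div_self_antitoneOn hpos hf' hx hz hzx
  rw [abs_of_nonneg (sub_nonneg.2 (hf hy hx hyx)), abs_of_nonneg (sub_nonneg.2 (hf hz hy hzy)),
    abs_of_nonpos (sub_nonpos.2 (hf hz hx hzx)), abs_of_nonneg (sub_nonneg.2 hyx),
    abs_of_nonneg (sub_nonneg.2 hzy), abs_of_nonpos (sub_nonpos.2 hzx)]
  linarith

theorem sum_sum_abs_sub_mul_sum_le {ι : Type*} [Fintype ι] (hpos : ∀ x ∈ S, 0 < x)
    (hf : MonotoneOn f S) (hf' : AntitoneOn (fun x => f x / x) S) {v : ι → ℝ}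
    (hv : ∀ i, v i ∈ S) :
    (∑ i, ∑ j, |f (v i) - f (v j)|) * ∑ k, v k ≤ (∑ i, ∑ j, |v i - v j|) * ∑ k, f (v k) := by
  simp only [sum_mul]
  simp only [mul_sum]
  exact Finset.sum_sum_sum_le_of_cyclic fun i j k =>
    abs_sub_mul_cyclic_le hpos hf hf' (hv i) (hv j) (hv k)

theorem gini_comp_le_gini {m : ℕ} (hm : 0 < m) (hpos : ∀ x ∈ S, 0 < x)
    (hf : MonotoneOn f S) (hf' : AntitoneOn (fun x => f x / x) S) {v : Fin m → ℝ}
    (hv : ∀ i, v i ∈ S) (hfv : 0 < ∑ i, f (v i)) :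
    gini m (fun i => f (v i)) ≤ gini m v := by
  have : Nonempty (Fin m) := ⟨⟨0, hm⟩⟩
  have hsum : 0 < ∑ i, v i := Finset.sum_pos (fun i _ => hpos _ (hv i)) univ_nonempty
  rw [gini, gini, div_le_div_iff₀ (by positivity) (by positivity)]
  have hcross := sum_sum_abs_sub_mul_sum_le hpos hf hf' hv
  calc (∑ i, ∑ j, |f (v i) - f (v j)|) * (2 * m * ∑ i, v i)
      = 2 * m * ((∑ i, ∑ j, |f (v i) - f (v j)|) * ∑ i, v i) := by ring
    _ ≤ 2 * m * ((∑ i, ∑ j, |v i - v j|) * ∑ i, f (v i)) := by gcongr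
    _ = (∑ i, ∑ j, |v i - v j|) * (2 * m * ∑ i, f (v i)) := by ring

end

/-- For stakes at least `e`, the Gini coefficient of the logarithmic stake weights
is at most the Gini coefficient of the linear stake weights. -/
theorem lsw_gini_le_linear (m : ℕ) (hm : 0 < m) (s : Fin m → ℝ)
    (hs : ∀ i, Real.exp 1 ≤ s i) :
    gini m (fun i => Real.log (s i)) ≤ gini m s := by
  have hpos : ∀ x ∈ Set.Ici (Real.exp 1), 0 < x := fun x hx => (Real.exp_pos 1).trans_le hx
  have hlog : ∀ i, 1 ≤ Real.log (s i) := fun i => by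
    simpa using Real.log_le_log (Real.exp_pos 1) (hs i)
  have : Nonempty (Fin m) := ⟨⟨0, hm⟩⟩
  exact gini_comp_le_gini hm hpos (Real.strictMonoOn_log.monotoneOn.mono hpos)
    Real.log_div_self_antitoneOn hs
    (Finset.sum_pos (fun i _ => one_pos.trans_le (hlog i)) univ_nonempty)
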